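/- arXiv:1804.07957 — 3 statements merged into one kernel-verified Lean document; each statement's English description precedes it below -/
import Mathlib

section
/- Let G be a locally finite group in which every solvable subgroup has derived length at most d, and let H ≤ G and K ⊴ H. Then every solvable subgroup of the section H/K has derived length at most d. -/
/-!
Write `x ∈ T^{(d)}` for a solvable `T ≤ H/K`. The element `x` already lies in the `d`-th derived
subgroup of a finitely generated `F ≤ T`, and `F` is the image of a finite subgroup `S ≤ H`. A
subgroup `P ≤ S` minimal with respect to mapping onto `F` has `P ∩ K` contained in the Frattini
subgroup of `P`, which is nilpotent; hence `P` is solvable. As a solvable subgroup of `G`, `P` has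
derived length at most `d`, and so does its image `F`. Thus `x = 1`.
-/

open Subgroup

namespace Subgroup

variable {X Y : Type*} [Group X] [Group Y]

def derivedSeriesOf (A : Subgroup X) : ℕ → Subgroup X
  | 0 => A
  | n + 1 => ⁅A.derivedSeriesOf n, A.derivedSeriesOf n⁆

theorem map_subtype_derivedSeries (A : Subgroup X) (n : ℕ) :
    (derivedSeries A n).map A.subtype = A.derivedSeriesOf n := by
  induction n with
  | zero => rw [derivedSeries_zero, ← MonoidHom.range_eq_map, range_subtype]; rfl
  | succ n ih => rw [derivedSeries_succ, map_commutator, ih]; rfl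

theorem derivedSeries_eq_bot_iff (A : Subgroup X) (n : ℕ) :
    derivedSeries A n = ⊥ ↔ A.derivedSeriesOf n = ⊥ := by
  rw [← map_subtype_derivedSeries, map_eq_bot_iff_of_injective _ A.subtype_injective]

theorem map_derivedSeriesOf (f : X →* Y) (A : Subgroup X) (n : ℕ) :
    (A.derivedSeriesOf n).map f = (A.map f).derivedSeriesOf n := by
  induction n with
  | zero => rfl
  | succ n ih => rw [derivedSeriesOf, map_commutator, ih]; rfl

theorem derivedSeriesOf_mono {A B : Subgroup X} (h : A ≤ B) (n : ℕ) :
    A.derivedSeriesOf n ≤ B.derivedSeriesOf n := by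
  induction n with
  | zero => exact h
  | succ n ih => exact commutator_mono ih ih

theorem derivedSeries_map_eq_bot_iff {f : X →* Y} (hf : Function.Injective f) (A : Subgroup X)
    (n : ℕ) : derivedSeries (A.map f) n = ⊥ ↔ derivedSeries A n = ⊥ := by
  rw [derivedSeries_eq_bot_iff, derivedSeries_eq_bot_iff, ← map_derivedSeriesOf,
    map_eq_bot_iff_of_injective _ hf]

theorem exists_finset_of_mem_derivedSeriesOf {A : Subgroup X} {n : ℕ} {x : X}
    (hx : x ∈ A.derivedSeriesOf n) :
    ∃ s : Finset X, (s : Set X) ⊆ A ∧ x ∈ (closure (s : Set X)).derivedSeriesOf n := by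
  classical
  induction n generalizing x with
  | zero =>
    exact ⟨{x}, by rw [Finset.coe_singleton, Set.singleton_subset_iff]; exact hx,
      subset_closure (by simp)⟩
  | succ n ih =>
    have grow {s t : Finset X} (hst : s ⊆ t) (m : ℕ) :
        (closure (s : Set X)).derivedSeriesOf m ≤ (closure (t : Set X)).derivedSeriesOf m :=
      derivedSeriesOf_mono (closure_mono (Finset.coe_subset.2 hst)) m
    rw [derivedSeriesOf, commutator_def] at hx
    induction hx using closure_induction with
    | mem y hy =>
      obtain ⟨g, hg, h, hh, rfl⟩ := hy
      obtain ⟨s₁, hs₁, hg⟩ := ih hg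
      obtain ⟨s₂, hs₂, hh⟩ := ih hh
      exact ⟨s₁ ∪ s₂, by simp [hs₁, hs₂],
        commutator_mem_commutator (grow Finset.subset_union_left n hg)
          (grow Finset.subset_union_right n hh)⟩
    | one => exact ⟨∅, by simp, one_mem _⟩
    | mul y z _ _ hy hz =>
      obtain ⟨s₁, hs₁, hy⟩ := hy
      obtain ⟨s₂, hs₂, hz⟩ := hz
      exact ⟨s₁ ∪ s₂, by simp [hs₁, hs₂],
        mul_mem (grow Finset.subset_union_left _ hy) (grow Finset.subset_union_right _ hz)⟩
    | inv y _ hy =>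
      obtain ⟨s, hs, hy⟩ := hy
      exact ⟨s, hs, inv_mem hy⟩

theorem exists_finset_map_closure_eq {f : X →* Y} (hf : Function.Surjective f) (s : Finset Y) :
    ∃ t : Finset X, (closure (t : Set X)).map f = closure (s : Set Y) := by
  classical
  refine ⟨s.image (Function.surjInv hf), ?_⟩
  simp [MonoidHom.map_closure, Set.image_image, Function.surjInv_eq hf]

theorem finite_closure_finset_of_locallyFinite
    (hLF : ∀ s : Finset X, Finite (closure (s : Set X))) (H : Subgroup X) (t : Finset H) :
    Finite (closure (t : Set H)) := by
  classical
  have hfin := hLF (t.image H.subtype)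
  rw [Finset.coe_image, ← MonoidHom.map_closure] at hfin
  exact Finite.of_equiv _ (equivMapOfInjective _ _ H.subtype_injective).symm.toEquiv

theorem isSolvable_map (f : X →* Y) (A : Subgroup X) [Group.IsSolvable A] :
    Group.IsSolvable (A.map f) :=
  Group.isSolvable_of_surjective (f.subgroupMap_surjective A)

end Subgroup

theorem le_frattini_of_forall_sup_eq_top {S : Type*} [Group S] {N : Subgroup S}
    (h : ∀ M : Subgroup S, M ⊔ N = ⊤ → M = ⊤) : N ≤ frattini S :=
  le_iInf₂ fun M hM => by
    by_contra hNM
    exact hM.1 (h M (hM.2 _ (left_lt_sup.2 hNM)))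

theorem isSolvable_of_ker_le_frattini {S Q : Type*} [Group S] [Group Q] [Finite S] (f : S →* Q)
    (hf : f.ker ≤ frattini S) [Group.IsSolvable f.range] : Group.IsSolvable S :=
  have := frattini_nilpotent (G := S)
  Group.isSolvable_of_ker_le_range (frattini S).subtype f.rangeRestrict
    (by rwa [MonoidHom.ker_rangeRestrict, range_subtype])

theorem exists_isSolvable_map_eq_range {S Q : Type*} [Group S] [Group Q] [Finite S] (f : S →* Q)
    [Group.IsSolvable f.range] : ∃ P : Subgroup S, Group.IsSolvable P ∧ P.map f = f.range := by
  obtain ⟨P, -, hP⟩ := exists_minimal_le_of_wellFoundedLT (fun P : Subgroup S => P.map f = f.range)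
    ⊤ f.range_eq_map.symm
  have hrange : (f.domRestrict P).range = f.range := by rw [MonoidHom.domRestrict_range, hP.prop]
  refine ⟨P, ?_, hP.prop⟩
  have hker : (f.domRestrict P).ker ≤ frattini P := le_frattini_of_forall_sup_eq_top fun M hM => by
    have hMf : (M.map P.subtype).map f = f.range := by
      rw [map_map, ← hrange, MonoidHom.range_eq_map]
      exact map_eq_map_iff.2 (hM.trans (top_sup_eq _).symm)
    rw [eq_top_iff, ← map_subtype_le_map_subtype, ← MonoidHom.range_eq_map, range_subtype]
    exact hP.le_of_le hMf (map_subtype_le M)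
  have : Group.IsSolvable (f.domRestrict P).range := hrange ▸ inferInstance
  exact isSolvable_of_ker_le_frattini _ hker

/-- If `G` is locally finite and every solvable subgroup of `G` has derived length at most `d`,
then every solvable subgroup of any section `H/K` of `G` has derived length at most `d`. -/
theorem stmt_1 {G : Type*} [Group G]
    (hLF : ∀ s : Finset G, Finite (Subgroup.closure (s : Set G)))
    (d : ℕ)
    (hG : ∀ S : Subgroup G, IsSolvable S → derivedSeries S d = ⊥)
    (H : Subgroup G) (K : Subgroup H) [K.Normal]
    (T : Subgroup (H ⧸ K)) (hT : IsSolvable T) :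
    derivedSeries T d = ⊥ := by
  have : Group.IsSolvable T := hT
  rw [derivedSeries_eq_bot_iff, eq_bot_iff_forall]
  intro x hx
  obtain ⟨s, hsT, hxs⟩ := exists_finset_of_mem_derivedSeriesOf hx
  suffices (closure (s : Set (H ⧸ K))).derivedSeriesOf d = ⊥ by rwa [this, mem_bot] at hxs
  obtain ⟨t, ht⟩ := exists_finset_map_closure_eq (QuotientGroup.mk'_surjective K) s
  have := finite_closure_finset_of_locallyFinite hLF H t
  let φ := (QuotientGroup.mk' K).comp (closure (t : Set H)).subtype
  have hφ : φ.range = closure (s : Set (H ⧸ K)) := by rw [MonoidHom.range_comp, range_subtype, ht]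
  have : Group.IsSolvable φ.range :=
    hφ ▸ Group.isSolvable_of_isSolvable_injective (inclusion_injective ((closure_le T).2 hsT))
  obtain ⟨P, hP, hPφ⟩ := exists_isSolvable_map_eq_range φ
  let ψ := H.subtype.comp (closure (t : Set H)).subtype
  have hψ : Function.Injective ψ := H.subtype_injective.comp (Subgroup.closure _).subtype_injective
  have hPd : derivedSeries P d = ⊥ :=
    (derivedSeries_map_eq_bot_iff hψ P d).1 (hG _ (isSolvable_map ψ P))
  rw [← hφ, ← hPφ, ← map_derivedSeriesOf, (derivedSeries_eq_bot_iff P d).1 hPd, Subgroup.map_bot]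
end

section
/- Let B be a finite cyclic group of automorphisms of a locally finite group K, with |B| a π-number, and let S be a B-invariant normal solvable π'-subgroup of K such that only finitely many primes divide orders of elements of S. Then C_{K/S}(B) is the image of C_K(B) under the projection K → K/S. -/
/-!
Write `B = ⟨β⟩` with `β ^ n = 1`. If `kS` is fixed by `B`, then `t = k⁻¹ β k ∈ S` satisfies the
cocycle condition `t · β t ⋯ β^{n-1} t = k⁻¹ β^n k = 1`, and `k s` is fixed by `β` exactly when
`t · β s = s`, i.e. when `t` is a coboundary. By local finiteness `t` lies in a finite
`B`-invariant subgroup `H ≤ S`, which is solvable of order prime to `n`. There every such cocycle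
is a coboundary: in an abelian group `t ^ n` is the coboundary of `∏_{j<n} t · β t ⋯ β^{j-1} t`,
and `n` is invertible modulo the order; the solvable case follows by induction on the order,
passing to the abelianization and then to the commutator subgroup.
-/

namespace MulAut

variable {G G' : Type*} [Group G] [Group G']

/-- `(t, α) ^ j = (α.twistedPow t j, α ^ j)` in the semidirect product `G ⋊ ⟨α⟩`. -/
def twistedPow (α : MulAut G) (t : G) : ℕ → G
  | 0 => 1
  | j + 1 => α.twistedPow t j * (α ^ j) t

theorem twistedPow_succ' (α : MulAut G) (t : G) (j : ℕ) :
    α.twistedPow t (j + 1) = t * α (α.twistedPow t j) := by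
  induction j with
  | zero => simp [twistedPow]
  | succ j ih =>
    conv_lhs => rw [twistedPow, ih]
    rw [twistedPow, map_mul, pow_succ', mul_apply, mul_assoc]

theorem twistedPow_one (α : MulAut G) (j : ℕ) : α.twistedPow 1 j = 1 := by
  induction j with
  | zero => rfl
  | succ j ih => rw [twistedPow, ih, map_one, mul_one]

theorem twistedPow_inv_mul_mul_apply (α : MulAut G) (t s : G) (j : ℕ) :
    α.twistedPow (s⁻¹ * t * α s) j = s⁻¹ * α.twistedPow t j * (α ^ j) s := by
  induction j with
  | zero => simp [twistedPow]
  | succ j ih =>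
    rw [twistedPow, ih, twistedPow, map_mul, map_mul, map_inv, pow_succ, mul_apply]
    group

theorem twistedPow_inv_mul_apply (α : MulAut G) (k : G) (j : ℕ) :
    α.twistedPow (k⁻¹ * α k) j = k⁻¹ * (α ^ j) k := by
  simpa [twistedPow_one] using α.twistedPow_inv_mul_mul_apply 1 k j

theorem _root_.Function.Semiconj.mulAut_pow {f : G → G'} {α : MulAut G} {β : MulAut G'}
    (h : Function.Semiconj f α β) (j : ℕ) : Function.Semiconj f ⇑(α ^ j) ⇑(β ^ j) := by
  induction j with
  | zero => exact Function.Semiconj.id_right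
  | succ j ih => simpa only [pow_succ, coe_mul] using ih.comp_right h

theorem map_twistedPow (φ : G →* G') {α : MulAut G} {β : MulAut G'}
    (h : Function.Semiconj φ α β) (t : G) (j : ℕ) :
    φ (α.twistedPow t j) = β.twistedPow (φ t) j := by
  induction j with
  | zero => exact map_one φ
  | succ j ih => rw [twistedPow, map_mul, ih, h.mulAut_pow, twistedPow]

def restrict (α : MulAut G) (K : Subgroup G) (hK : K.map α.toMonoidHom = K) : MulAut K :=
  (α.subgroupMap K).trans (MulEquiv.subgroupCongr hK)

theorem semiconj_subtype_restrict (α : MulAut G) (K : Subgroup G)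
    (hK : K.map α.toMonoidHom = K) : Function.Semiconj K.subtype (α.restrict K hK) α :=
  fun _ ↦ rfl

theorem restrict_pow_eq_one (α : MulAut G) (K : Subgroup G) (hK : K.map α.toMonoidHom = K)
    {n : ℕ} (hαn : α ^ n = 1) : α.restrict K hK ^ n = 1 := by
  ext x
  have hx := (α.semiconj_subtype_restrict K hK).mulAut_pow n x
  rw [hαn, one_apply] at hx
  exact hx

theorem exists_mul_apply_eq_of_twistedPow_eq_one {A : Type*} [CommGroup A] [Finite A]
    (α : MulAut A) {n : ℕ} (hn : n.Coprime (Nat.card A)) {t : A} (ht : α.twistedPow t n = 1) :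
    ∃ s, t * α s = s := by
  set u := ∏ j ∈ Finset.range n, α.twistedPow t j
  have hu : t ^ n * α u = u := by
    have h := Finset.prod_range_succ' (α.twistedPow t) n
    rw [Finset.prod_range_succ, ht, mul_one, twistedPow, mul_one] at h
    calc t ^ n * α u = ∏ j ∈ Finset.range n, α.twistedPow t (j + 1) := by
          simp only [u, twistedPow_succ', Finset.prod_mul_distrib, Finset.prod_const,
            Finset.card_range, map_prod]
      _ = u := h.symm
  obtain ⟨m, hm⟩ := exists_pow_eq_self_of_coprime (hn.coprime_dvd_right (orderOf_dvd_natCard t))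
  exact ⟨u ^ m, by rw [map_pow, ← hm, ← mul_pow, hu]⟩

theorem exists_inv_mul_mul_apply_mem_commutator [Finite G] (α : MulAut G) {n : ℕ}
    (hn : n.Coprime (Nat.card G)) {t : G} (ht : α.twistedPow t n = 1) :
    ∃ s, s⁻¹ * t * α s ∈ commutator G := by
  have hof : Function.Semiconj Abelianization.of α α.abelianizationCongr :=
    fun g ↦ (abelianizationCongr_of α g).symm
  obtain ⟨s', hs'⟩ := exists_mul_apply_eq_of_twistedPow_eq_one α.abelianizationCongr
    (hn.coprime_dvd_right (Subgroup.card_quotient_dvd_card _))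
    (by rw [← map_twistedPow _ hof, ht, map_one])
  obtain ⟨s, rfl⟩ := QuotientGroup.mk_surjective s'
  refine ⟨s, ?_⟩
  rw [← Abelianization.ker_of, MonoidHom.mem_ker, map_mul, map_mul, map_inv, hof s, mul_assoc]
  exact (congrArg _ hs').trans (inv_mul_cancel _)

theorem exists_mul_apply_eq_of_twistedPow_eq_one_of_isSolvable [Finite G] [Group.IsSolvable G]
    (α : MulAut G) {n : ℕ} (hαn : α ^ n = 1) (hn : n.Coprime (Nat.card G)) {t : G}
    (ht : α.twistedPow t n = 1) : ∃ s, t * α s = s := by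
  induction hG : Nat.card G using Nat.strong_induction_on generalizing G with
  | _ N ih =>
  subst hG
  rcases subsingleton_or_nontrivial G with _ | _
  · exact ⟨1, Subsingleton.elim _ _⟩
  obtain ⟨s₁, hs₁⟩ := α.exists_inv_mul_mul_apply_mem_commutator hn ht
  set C := commutator G
  have hC : C.map α.toMonoidHom = C := Subgroup.characteristic_iff_map_eq.mp inferInstance α
  have hCG : Nat.card C < Nat.card G := by
    rw [← C.index_mul_card]
    exact lt_mul_of_one_lt_left Nat.card_pos <| Subgroup.one_lt_index_of_ne_top
      (Group.IsSolvable.commutator_lt_top_of_nontrivial G).ne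
  obtain ⟨s₂, hs₂⟩ := ih _ hCG (α.restrict C hC) (α.restrict_pow_eq_one C hC hαn)
    (hn.coprime_dvd_right C.card_subgroup_dvd_card) (t := ⟨_, hs₁⟩)
    (C.subtype_injective <| by
      rw [map_twistedPow _ (α.semiconj_subtype_restrict C hC), map_one, C.coe_subtype, twistedPow_inv_mul_mul_apply, ht, hαn,
        one_apply, mul_one, inv_mul_cancel])
    rfl
  refine ⟨s₁ * s₂, ?_⟩
  have hs₂' : s₁⁻¹ * t * α s₁ * α s₂ = s₂ := congrArg C.subtype hs₂
  calc t * α (s₁ * s₂) = s₁ * (s₁⁻¹ * t * α s₁ * α s₂) := by rw [map_mul]; group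
    _ = s₁ * s₂ := by rw [hs₂']

theorem exists_apply_mul_eq_of_inv_mul_apply_mem {K : Type*} [Group K] (β : MulAut K) {n : ℕ}
    (hβn : β ^ n = 1) (H : Subgroup K) [Finite H] [Group.IsSolvable H]
    (hH : H.map β.toMonoidHom = H) (hn : n.Coprime (Nat.card H)) {k : K}
    (hk : k⁻¹ * β k ∈ H) : ∃ s ∈ H, β (k * s) = k * s := by
  obtain ⟨s, hs⟩ := (β.restrict H hH).exists_mul_apply_eq_of_twistedPow_eq_one_of_isSolvable
    (β.restrict_pow_eq_one H hH hβn) hn (t := ⟨_, hk⟩)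
    (H.subtype_injective <| by
      rw [map_twistedPow _ (β.semiconj_subtype_restrict H hH), map_one, H.coe_subtype,
        twistedPow_inv_mul_apply, hβn, one_apply, inv_mul_cancel])
  have hs' : k⁻¹ * β k * β s = s := congrArg H.subtype hs
  refine ⟨s, s.2, ?_⟩
  calc β (k * s) = k * (k⁻¹ * β k * β s) := by rw [map_mul]; group
    _ = k * s := by rw [hs']

end MulAut

theorem Nat.Coprime.of_forall_prime_dvd_orderOf {G : Type*} [Group G] [Finite G] (π : Set ℕ)
    {n : ℕ} (hn : ∀ q : ℕ, q.Prime → q ∣ n → q ∈ π)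
    (hG : ∀ x : G, ∀ q : ℕ, q.Prime → q ∣ orderOf x → q ∉ π) : n.Coprime (Nat.card G) :=
  Nat.coprime_of_dvd fun q hq hqn hqG ↦ by
    have := Fact.mk hq
    obtain ⟨x, hx⟩ := exists_prime_orderOf_dvd_card' q hqG
    exact hG x q hq (hx ▸ dvd_rfl) (hn q hq hqn)

theorem exists_finite_invariant_subgroup {K : Type*} [Group K]
    (hLF : ∀ s : Finset K, Finite (Subgroup.closure (s : Set K)))
    (B : Subgroup (MulAut K)) [Finite B] (S : Subgroup K)
    (hS : ∀ b ∈ B, S.map b.toMonoidHom = S) {t : K} (ht : t ∈ S) :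
    ∃ H : Subgroup K, Finite H ∧ t ∈ H ∧ H ≤ S ∧ ∀ b ∈ B, H.map b.toMonoidHom = H := by
  have hfin : (MulAction.orbit B t).Finite := Set.finite_range _
  refine ⟨Subgroup.closure (MulAction.orbit B t), ?_, Subgroup.subset_closure
    (MulAction.mem_orbit_self t), ?_, fun b hb ↦ ?_⟩
  · simpa using hLF hfin.toFinset
  · rw [Subgroup.closure_le]
    rintro _ ⟨b, rfl⟩
    rw [← hS b b.2]
    exact ⟨t, ht, rfl⟩
  · rw [MonoidHom.map_closure]
    exact congrArg Subgroup.closure (MulAction.smul_orbit (⟨b, hb⟩ : B) t)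

theorem stmt_4_general {K : Type*} [Group K]
    (hLF : ∀ s : Finset K, Finite (Subgroup.closure (s : Set K)))
    (π : Set ℕ)
    (B : Subgroup (MulAut K)) [Finite B] (hcyc : IsCyclic B)
    (hBpi : ∀ q : ℕ, q.Prime → q ∣ Nat.card B → q ∈ π)
    (S : Subgroup K) (hsolv : IsSolvable S)
    (hSinv : ∀ b ∈ B, Subgroup.map (MulEquiv.toMonoidHom b) S = S)
    (hSpi' : ∀ x ∈ S, ∀ q : ℕ, q.Prime → q ∣ orderOf x → q ∉ π) :
    {x : K ⧸ S | ∀ b ∈ B, ∀ k : K, (QuotientGroup.mk k : K ⧸ S) = x →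
        (QuotientGroup.mk (b k) : K ⧸ S) = x}
      = QuotientGroup.mk '' {k : K | ∀ b ∈ B, b k = k} := by
  obtain ⟨β, rfl⟩ := B.isCyclic_iff_exists_zpowers_eq_top.mp hcyc
  rw [Nat.card_zpowers] at hBpi
  apply Set.Subset.antisymm
  · intro x hx
    obtain ⟨k, rfl⟩ := QuotientGroup.mk_surjective x
    have hkS : k⁻¹ * β k ∈ S := QuotientGroup.eq.mp (hx β (Subgroup.mem_zpowers β) k rfl).symm
    obtain ⟨H, _, hkH, hHS, hHinv⟩ := exists_finite_invariant_subgroup hLF _ S hSinv hkS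
    have : Group.IsSolvable S := hsolv
    have : Group.IsSolvable H := Group.isSolvable_of_isSolvable_injective
      (Subgroup.inclusion_injective hHS)
    obtain ⟨s, hsH, hs⟩ := β.exists_apply_mul_eq_of_inv_mul_apply_mem (pow_orderOf_eq_one β) H
      (hHinv β (Subgroup.mem_zpowers β)) (.of_forall_prime_dvd_orderOf π hBpi
        fun x q hq hqx ↦ hSpi' x (hHS x.2) q hq (by rwa [Subgroup.orderOf_coe])) hkH
    refine ⟨k * s, fun b hb ↦ ?_, QuotientGroup.eq.mpr ?_⟩
    · exact (Subgroup.zpowers_le (H := MulAction.stabilizer _ (k * s)).mpr hs) hb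
    · simpa using S.inv_mem (hHS hsH)
  · rintro _ ⟨k₀, hk₀, rfl⟩ b hb k hk
    have hbk : b (k⁻¹ * k₀) ∈ S := by
      rw [← hSinv b hb]
      exact ⟨_, QuotientGroup.eq.mp hk, rfl⟩
    rw [map_mul, map_inv, hk₀ b hb] at hbk
    exact QuotientGroup.eq.mpr hbk

/-- Coprime-action lifting of centralizers (locally finite case): if `B` is a finite cyclic
group of automorphisms of a locally finite group `K` with `|B|` a `π`-number, and `S` is a
`B`-invariant normal solvable `π'`-subgroup of `K` such that only finitely many primes divide
orders of elements of `S`, then `C_{K/S}(B)` is the image of `C_K(B)` under `K → K/S`. -/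
theorem stmt_4 {K : Type*} [Group K]
    (hLF : ∀ s : Finset K, Finite (Subgroup.closure (s : Set K)))
    (π : Set ℕ)
    (B : Subgroup (MulAut K)) [Finite B] (hcyc : IsCyclic B)
    (hBpi : ∀ q : ℕ, q.Prime → q ∣ Nat.card B → q ∈ π)
    (S : Subgroup K) [S.Normal] (hsolv : IsSolvable S)
    (hSinv : ∀ b ∈ B, Subgroup.map (MulEquiv.toMonoidHom b) S = S)
    (hSpi' : ∀ x ∈ S, ∀ q : ℕ, q.Prime → q ∣ orderOf x → q ∉ π)
    (hfin : {q : ℕ | q.Prime ∧ ∃ x ∈ S, q ∣ orderOf x}.Finite) :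
    {x : K ⧸ S | ∀ b ∈ B, ∀ k : K, (QuotientGroup.mk k : K ⧸ S) = x →
        (QuotientGroup.mk (b k) : K ⧸ S) = x}
      = QuotientGroup.mk '' {k : K | ∀ b ∈ B, b k = k} :=
  stmt_4_general hLF π B hcyc hBpi S hsolv hSinv hSpi'
end

section
/- Let H be a group in which every solvable subgroup has derived length at most d (H is 'constrained'), and suppose H is locally finite. Then H has a unique maximal normal locally solvable subgroup R(H), and R(H) is solvable of derived length at most d. -/
/-- A group is locally solvable if every finitely generated subgroup is solvable. -/
def IsLocallySolvable (G : Type*) [Group G] : Prop :=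
  ∀ s : Finset G, IsSolvable (Subgroup.closure (s : Set G))

/-!
Derived series commute with directed unions of subgroups, since a commutator of two elements of
a directed union already lies in one member. Applied to the finitely generated subgroups of a
locally solvable subgroup `K`, this gives `K⁽ᵈ⁾ = 1` when all solvable subgroups have derived
length at most `d`. So the normal locally solvable subgroups are solvable, hence closed under
joins, hence directed; their union `R` again has `R⁽ᵈ⁾ = 1`, and it is the maximal one.
-/

open Subgroup

section

variable {G G' : Type*} [Group G] [Group G']

theorem derivedSeries_eq_bot_of_injective {f : G →* G'} (hf : Function.Injective f) {n : ℕ}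
    (h : derivedSeries G' n = ⊥) : derivedSeries G n = ⊥ := by
  refine (map_eq_bot_iff_of_injective _ hf).1 (le_bot_iff.1 ?_)
  exact h ▸ map_derivedSeries_le_derivedSeries f n

theorem map_subtype_derivedSeries_mono {K L : Subgroup G} (h : K ≤ L) (n : ℕ) :
    (derivedSeries K n).map K.subtype ≤ (derivedSeries L n).map L.subtype := by
  have := map_mono (f := L.subtype) (map_derivedSeries_le_derivedSeries (inclusion h) n)
  rwa [map_map, subtype_comp_inclusion] at this

theorem map_subtype_derivedSeries_iSup_of_directed {ι : Type*} [Nonempty ι]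
    {K : ι → Subgroup G} (hK : Directed (· ≤ ·) K) (n : ℕ) :
    (derivedSeries ↥(⨆ i, K i) n).map (⨆ i, K i).subtype =
      ⨆ i, (derivedSeries (K i) n).map (K i).subtype := by
  induction n with
  | zero => simp [← MonoidHom.range_eq_map]
  | succ n ih =>
    have hD : Directed (· ≤ ·) fun i ↦ (derivedSeries (K i) n).map (K i).subtype :=
      hK.mono_comp (g := fun L : Subgroup G ↦ (derivedSeries L n).map L.subtype) _
        fun _ _ h ↦ map_subtype_derivedSeries_mono h n
    simp only [derivedSeries_succ, map_commutator, ih]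
    refine le_antisymm ?_
      (iSup_le fun i ↦ commutator_mono (le_iSup_of_le i le_rfl) (le_iSup_of_le i le_rfl))
    rw [commutator_le]
    intro a ha b hb
    obtain ⟨i, hi⟩ := (mem_iSup_of_directed hD).1 ha
    obtain ⟨j, hj⟩ := (mem_iSup_of_directed hD).1 hb
    obtain ⟨k, hik, hjk⟩ := hD i j
    exact mem_iSup_of_mem k (commutator_mem_commutator (hik hi) (hjk hj))

theorem derivedSeries_iSup_eq_bot_of_directed {ι : Type*} [Nonempty ι] {K : ι → Subgroup G}
    (hK : Directed (· ≤ ·) K) {n : ℕ} (h : ∀ i, derivedSeries (K i) n = ⊥) :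
    derivedSeries ↥(⨆ i, K i) n = ⊥ := by
  refine (map_eq_bot_iff_of_injective _ (subtype_injective _)).1 ?_
  simp [map_subtype_derivedSeries_iSup_of_directed hK, h]

theorem derivedSeries_eq_bot_of_forall_finset {n : ℕ}
    (h : ∀ s : Finset G, derivedSeries (closure (s : Set G)) n = ⊥) :
    derivedSeries G n = ⊥ := by
  have hdir : Directed (· ≤ ·) fun s : Finset G ↦ closure (s : Set G) :=
    Monotone.directed_le fun _ _ hst ↦ closure_mono (Finset.coe_subset.2 hst)
  have htop : ⨆ s : Finset G, closure (s : Set G) = ⊤ :=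
    eq_top_iff.2 fun x _ ↦ mem_iSup_of_mem {x} (subset_closure (by simp))
  let e : G ≃* (⊤ : Subgroup G) := topEquiv.symm
  refine derivedSeries_eq_bot_of_injective (f := e.toMonoidHom) e.injective ?_
  exact htop ▸ derivedSeries_iSup_eq_bot_of_directed hdir h

theorem isSolvable_sup_of_normal (K N : Subgroup G) [N.Normal] [Group.IsSolvable K]
    [Group.IsSolvable N] : Group.IsSolvable ↥(K ⊔ N) := by
  rw [Group.isSolvable_iff_subgroup_quotient (N.subgroupOf (K ⊔ N))]
  let e₁ := subgroupOfEquivOfLe (le_sup_right : N ≤ K ⊔ N)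
  let e₂ := QuotientGroup.quotientInfEquivProdNormalQuotient K N
  exact ⟨Group.isSolvable_of_isSolvable_injective (f := e₁.toMonoidHom) e₁.injective,
    Group.isSolvable_of_surjective (f := e₂.toMonoidHom) e₂.surjective⟩

end

theorem IsLocallySolvable.of_isSolvable {G : Type*} [Group G] [Group.IsSolvable G] :
    IsLocallySolvable G :=
  fun _ ↦ (inferInstance : Group.IsSolvable _)

theorem IsLocallySolvable.derivedSeries_eq_bot {H : Type*} [Group H] {d : ℕ}
    (hcon : ∀ S : Subgroup H, IsSolvable S → derivedSeries S d = ⊥) {K : Subgroup H}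
    (hK : IsLocallySolvable K) : derivedSeries K d = ⊥ := by
  refine derivedSeries_eq_bot_of_forall_finset fun s ↦ ?_
  have : Group.IsSolvable _ := hK s
  let e := (closure (s : Set K)).equivMapOfInjective K.subtype K.subtype_injective
  exact derivedSeries_eq_bot_of_injective (f := e.toMonoidHom) e.injective
    (hcon _ (Group.isSolvable_of_surjective (f := e.toMonoidHom) e.surjective))

theorem directedOn_normal_isLocallySolvable {H : Type*} [Group H] {d : ℕ}
    (hcon : ∀ S : Subgroup H, IsSolvable S → derivedSeries S d = ⊥) :
    DirectedOn (· ≤ ·) {N : Subgroup H | N.Normal ∧ IsLocallySolvable N} := by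
  rintro N₁ ⟨hn₁, hN₁⟩ N₂ ⟨hn₂, hN₂⟩
  have : Group.IsSolvable N₁ := ⟨d, hN₁.derivedSeries_eq_bot hcon⟩
  have : Group.IsSolvable N₂ := ⟨d, hN₂.derivedSeries_eq_bot hcon⟩
  have := isSolvable_sup_of_normal N₁ N₂
  exact ⟨N₁ ⊔ N₂, ⟨inferInstance, .of_isSolvable⟩, le_sup_left, le_sup_right⟩

theorem stmt_13_general {H : Type*} [Group H] (d : ℕ)
    (hcon : ∀ S : Subgroup H, IsSolvable S → derivedSeries S d = ⊥) :
    ∃! R : Subgroup H,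
      R.Normal ∧ IsLocallySolvable R ∧
      (∀ R' : Subgroup H, R'.Normal → IsLocallySolvable R' → R' ≤ R) ∧
      IsSolvable R ∧ derivedSeries R d = ⊥ := by
  set S := {N : Subgroup H | N.Normal ∧ IsLocallySolvable N}
  have : Nonempty S := ⟨⊥, inferInstance, .of_isSolvable⟩
  have : ∀ N : S, (N : Subgroup H).Normal := fun N ↦ N.2.1
  set R := ⨆ N : S, (N : Subgroup H)
  have hRd : derivedSeries R d = ⊥ :=
    derivedSeries_iSup_eq_bot_of_directed (directedOn_normal_isLocallySolvable hcon).directed_val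
      fun N ↦ N.2.2.derivedSeries_eq_bot hcon
  have hR : Group.IsSolvable R := ⟨d, hRd⟩
  have hmax : ∀ R' : Subgroup H, R'.Normal → IsLocallySolvable R' → R' ≤ R :=
    fun R' hn hls ↦ le_iSup (fun N : S ↦ (N : Subgroup H)) ⟨R', hn, hls⟩
  refine ⟨R, ⟨inferInstance, .of_isSolvable, hmax, hR, hRd⟩, ?_⟩
  rintro R' ⟨hn', hls', hmax', -⟩
  exact le_antisymm (hmax R' hn' hls') (hmax' R inferInstance .of_isSolvable)

/-- A locally finite group in which every solvable subgroup has derived length at most `d`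
has a unique maximal normal locally solvable subgroup, which is moreover solvable of derived
length at most `d`. -/
theorem stmt_13 {H : Type*} [Group H] (d : ℕ)
    (hLF : ∀ s : Finset H, Finite (Subgroup.closure (s : Set H)))
    (hcon : ∀ S : Subgroup H, IsSolvable S → derivedSeries S d = ⊥) :
    ∃! R : Subgroup H,
      R.Normal ∧ IsLocallySolvable R ∧
      (∀ R' : Subgroup H, R'.Normal → IsLocallySolvable R' → R' ≤ R) ∧
      IsSolvable R ∧ derivedSeries R d = ⊥ :=
  stmt_13_general d hcon
end
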